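/- Let V_1 ⊆ V_2 ⊆ ... ⊆ V_m be a nested sequence of subspaces of C^n where V_{i+1} = V_i + span{v_{i+1}} with each v_{i+1} a unit vector orthogonal to V_i, and let x be a nonzero vector with x_{i,⊥} = (I - P_{V_i})x ≠ 0 for all i < m. Then sin∠(V_m, x) = ∏_{i=1}^{m-1} sin∠(v_{i+1}, x_{i,⊥}) · sin∠(V_1, x). -/

import Mathlib

/-!
If `v ⟂ K`, the projection onto `K ⊔ span {v}` is the projection onto `K` plus the projection
of the residual `x⊥ = x - P_K x` onto `span {v}`. So the residual of `x` against `K ⊔ span {v}`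
is the residual of `x⊥` against `span {v}`, whose length is `sin∠(v, x⊥) ‖x⊥‖`; dividing by
`‖x‖` gives `sin∠(K ⊔ span {v}, x) = sin∠(v, x⊥) · sin∠(K, x)`, and the product formula
follows by induction on the number of adjoined vectors.
-/

noncomputable def sinV {n : ℕ} (V : Submodule ℂ (EuclideanSpace ℂ (Fin n)))
    (x : EuclideanSpace ℂ (Fin n)) : ℝ :=
  ‖x - (Submodule.orthogonalProjection V x : EuclideanSpace ℂ (Fin n))‖ / ‖x‖

noncomputable def sinA {n : ℕ} (u w : EuclideanSpace ℂ (Fin n)) : ℝ :=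
  Real.sqrt (1 - ‖(inner ℂ u w : ℂ)‖ ^ 2 / (‖u‖ ^ 2 * ‖w‖ ^ 2))

section InnerProductSpace

variable {𝕜 E : Type*} [RCLike 𝕜] [NormedAddCommGroup E] [InnerProductSpace 𝕜 E]

namespace Submodule

theorem starProjection_sup_span_singleton {K : Submodule 𝕜 E} {v : E}
    [K.HasOrthogonalProjection] [(K ⊔ 𝕜 ∙ v).HasOrthogonalProjection] (hv : v ∈ Kᗮ) (x : E) :
    (K ⊔ 𝕜 ∙ v).starProjection x
      = K.starProjection x + (𝕜 ∙ v).starProjection (x - K.starProjection x) := by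
  set y := x - K.starProjection x with hy_def
  have hy : y ∈ Kᗮ := K.sub_starProjection_mem_orthogonal x
  have hspan : 𝕜 ∙ v ≤ Kᗮ := (span_singleton_le_iff_mem v Kᗮ).2 hv
  have hresidual : x - (K.starProjection x + (𝕜 ∙ v).starProjection y)
      = y - (𝕜 ∙ v).starProjection y := by
    rw [hy_def]; abel
  refine eq_starProjection_of_mem_orthogonal
    (add_mem_sup (K.starProjection_apply_mem x) ((𝕜 ∙ v).starProjection_apply_mem y)) ?_
  rw [hresidual, ← inf_orthogonal]
  exact ⟨sub_mem hy (hspan ((𝕜 ∙ v).starProjection_apply_mem y)),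
    (𝕜 ∙ v).sub_starProjection_mem_orthogonal y⟩

theorem norm_starProjection_span_singleton (u w : E) :
    ‖(𝕜 ∙ u).starProjection w‖ = ‖(inner 𝕜 u w : 𝕜)‖ / ‖u‖ := by
  rcases eq_or_ne u 0 with rfl | hu
  · simp
  rw [starProjection_singleton, norm_smul, norm_div, RCLike.norm_ofReal,
    abs_of_nonneg (by positivity)]
  field_simp

theorem norm_sq_eq_norm_starProjection_sq_add_norm_sub_sq (K : Submodule 𝕜 E)
    [K.HasOrthogonalProjection] (w : E) :
    ‖w‖ ^ 2 = ‖K.starProjection w‖ ^ 2 + ‖w - K.starProjection w‖ ^ 2 := by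
  simpa [starProjection_orthogonal'] using K.norm_sq_eq_add_norm_sq_starProjection w

end Submodule

theorem sqrt_one_sub_norm_inner_sq_div_eq (u : E) {w : E} (hw : w ≠ 0) :
    √(1 - ‖(inner 𝕜 u w : 𝕜)‖ ^ 2 / (‖u‖ ^ 2 * ‖w‖ ^ 2))
      = ‖w - (𝕜 ∙ u).starProjection w‖ / ‖w‖ := by
  have hw' : ‖w‖ ≠ 0 := norm_ne_zero_iff.2 hw
  have hpyth := (𝕜 ∙ u).norm_sq_eq_norm_starProjection_sq_add_norm_sub_sq w
  have hcos : ‖(inner 𝕜 u w : 𝕜)‖ ^ 2 / (‖u‖ ^ 2 * ‖w‖ ^ 2)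
      = ‖(𝕜 ∙ u).starProjection w‖ ^ 2 / ‖w‖ ^ 2 := by
    rw [Submodule.norm_starProjection_span_singleton, div_pow, div_div]
  rw [hcos, ← Real.sqrt_sq (div_nonneg (norm_nonneg _) (norm_nonneg _)), div_pow]
  congr 1
  field_simp
  linarith

end InnerProductSpace

section EuclideanSpace

variable {n : ℕ}

theorem sinA_eq_sinV_span_singleton (u : EuclideanSpace ℂ (Fin n))
    {w : EuclideanSpace ℂ (Fin n)} (hw : w ≠ 0) : sinA u w = sinV (ℂ ∙ u) w :=
  sqrt_one_sub_norm_inner_sq_div_eq u hw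

theorem sinV_sup_span_singleton {K : Submodule ℂ (EuclideanSpace ℂ (Fin n))}
    {v : EuclideanSpace ℂ (Fin n)} (hv : v ∈ Kᗮ) {x : EuclideanSpace ℂ (Fin n)}
    (hperp : x - K.starProjection x ≠ 0) :
    sinV (K ⊔ ℂ ∙ v) x = sinA v (x - K.starProjection x) * sinV K x := by
  rw [sinA_eq_sinV_span_singleton v hperp]
  simp only [sinV, ← Submodule.starProjection_apply,
    Submodule.starProjection_sup_span_singleton hv, sub_add_eq_sub_sub]
  exact (div_mul_div_cancel₀ (norm_ne_zero_iff.2 hperp)).symm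

end EuclideanSpace

theorem stmt2_general {n : ℕ} (m : ℕ) (V : ℕ → Submodule ℂ (EuclideanSpace ℂ (Fin n)))
    (v : ℕ → EuclideanSpace ℂ (Fin n)) (x : EuclideanSpace ℂ (Fin n))
    (hstep : ∀ i < m, V (i + 1) = V i ⊔ Submodule.span ℂ {v (i + 1)})
    (horth : ∀ i < m, v (i + 1) ∈ (V i)ᗮ)
    (hperp : ∀ i < m,
      x - (Submodule.orthogonalProjection (V i) x : EuclideanSpace ℂ (Fin n)) ≠ 0) :
    sinV (V m) x
      = (∏ i ∈ Finset.range m,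
          sinA (v (i + 1))
            (x - (Submodule.orthogonalProjection (V i) x : EuclideanSpace ℂ (Fin n)))) *
        sinV (V 0) x := by
  simp only [← Submodule.starProjection_apply] at hperp ⊢
  induction m with
  | zero => simp
  | succ m ih =>
    have hm := m.lt_succ_self
    rw [hstep m hm, sinV_sup_span_singleton (horth m hm) (hperp m hm),
      ih (fun i hi => hstep i (hi.trans hm)) (fun i hi => horth i (hi.trans hm))
        (fun i hi => hperp i (hi.trans hm)), Finset.prod_range_succ]
    ring

/-- Nested subspaces `V 0 ⊆ V 1 ⊆ ⋯ ⊆ V m` (standing for `V_1 ⊆ ⋯ ⊆ V_m`),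
each obtained by adjoining a unit vector orthogonal to the previous one. -/
theorem stmt2 {n : ℕ} (m : ℕ) (V : ℕ → Submodule ℂ (EuclideanSpace ℂ (Fin n)))
    (v : ℕ → EuclideanSpace ℂ (Fin n)) (x : EuclideanSpace ℂ (Fin n)) (hx : x ≠ 0)
    (hstep : ∀ i < m, V (i + 1) = V i ⊔ Submodule.span ℂ {v (i + 1)})
    (hunit : ∀ i < m, ‖v (i + 1)‖ = 1)
    (horth : ∀ i < m, v (i + 1) ∈ (V i)ᗮ)
    (hperp : ∀ i < m,
      x - (Submodule.orthogonalProjection (V i) x : EuclideanSpace ℂ (Fin n)) ≠ 0) :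
    sinV (V m) x
      = (∏ i ∈ Finset.range m,
          sinA (v (i + 1))
            (x - (Submodule.orthogonalProjection (V i) x : EuclideanSpace ℂ (Fin n)))) *
        sinV (V 0) x :=
  stmt2_general m V v x hstep horth hperp
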